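/- Let r ≥ 1 and let f be an r-even arithmetic function. Then: (i) for every positive integer x that is a multiple of r, Σ_{n=1}^{x} f̂(n) = f(r)·x; (ii) for every real x ≥ 1, |Σ_{n≤x} f̂(n) − f(r)·x| ≤ Σ_{d|r} d·|f'(r/d)|, where f' = μ * f; (iii) consequently the mean value lim_{x→∞} (1/x) Σ_{n≤x} f̂(n) exists and equals f(r). -/

import Mathlib

open Finset

/-- The discrete Fourier transform of an `r`-periodic arithmetic function:
`f̂(n) = Σ_{k=1}^{r} f(k) exp(−2πikn/r)`. -/
noncomputable def dft (r : ℕ) (f : ℕ → ℂ) (n : ℕ) : ℂ :=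
  ∑ k ∈ Finset.Icc 1 r, f k * Complex.exp (-(2 * (Real.pi : ℂ) * Complex.I * (k : ℂ) * (n : ℂ) / (r : ℂ)))

/-- The Ramanujan sum `c_q(n) = Σ_{1≤k≤q, gcd(k,q)=1} exp(2πikn/q)`. -/
noncomputable def ram (q n : ℕ) : ℂ :=
  ∑ k ∈ (Finset.Icc 1 q).filter (fun k => Nat.gcd k q = 1),
    Complex.exp (2 * (Real.pi : ℂ) * Complex.I * (k : ℂ) * (n : ℂ) / (q : ℂ))

/-- `f` is `r`-even: `f(gcd(n,r)) = f(n)` for all `n ≥ 1`. -/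
def IsREven (r : ℕ) (f : ℕ → ℂ) : Prop :=
  ∀ n : ℕ, 1 ≤ n → f (Nat.gcd n r) = f n

/-- `f' = μ * f`, the Dirichlet convolution of the Möbius function with `f`. -/
noncomputable def moeConv (f : ℕ → ℂ) (n : ℕ) : ℂ :=
  ∑ d ∈ n.divisors, ((ArithmeticFunction.moebius d : ℤ) : ℂ) * f (n / d)

/-- `g` is multiplicative: `g(1) = 1` and `g(mn) = g(m)g(n)` whenever `gcd(m,n) = 1`. -/
def IsMult (g : ℕ → ℂ) : Prop :=
  g 1 = 1 ∧ ∀ m n : ℕ, 1 ≤ m → 1 ≤ n → Nat.Coprime m n → g (m * n) = g m * g n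

lemma sum_moeConv (f : ℕ → ℂ) (m : ℕ) (hm : 1 ≤ m) :
    ∑ d ∈ m.divisors, moeConv f d = f m := by
  refine (ArithmeticFunction.sum_eq_iff_sum_smul_moebius_eq (f := moeConv f) (g := f)).mpr ?_ m hm
  intro n hn
  rw [Nat.sum_divisorsAntidiagonal (f := fun d e => (ArithmeticFunction.moebius d : ℤ) • f e)]
  unfold moeConv
  refine Finset.sum_congr rfl fun d hd => ?_
  rw [zsmul_eq_mul]

lemma gcd_divisors (k r : ℕ) (hk : 1 ≤ k) (hr : 1 ≤ r) :
    (Nat.gcd k r).divisors = r.divisors.filter (fun d => d ∣ k) := by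
  ext d
  simp only [Nat.mem_divisors, Finset.mem_filter, Nat.dvd_gcd_iff]
  constructor
  · rintro ⟨⟨h1, h2⟩, -⟩
    exact ⟨⟨h2, by omega⟩, h1⟩
  · rintro ⟨⟨h2, -⟩, h1⟩
    exact ⟨⟨h1, h2⟩, (Nat.gcd_pos_of_pos_right k (by omega)).ne'⟩

lemma count_dvd (m N : ℕ) (hm : 1 ≤ m) :
    ∑ n ∈ Finset.Icc 1 N, (if m ∣ n then (m : ℂ) else 0)
      = (m : ℂ) * ((N / m : ℕ) : ℂ) := by
  rw [← Finset.sum_filter, Finset.sum_const, nsmul_eq_mul,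
    show Finset.Icc 1 N = Finset.Ioc 0 N from Finset.Icc_add_one_left_eq_Ioc 0 N,
    Nat.Ioc_filter_dvd_card_eq_div]
  ring


lemma expSum (m : ℕ) (hm : 1 ≤ m) (n : ℕ) :
    ∑ j ∈ Finset.Icc 1 m, Complex.exp (-(2 * (Real.pi : ℂ) * Complex.I * (j : ℂ) * (n : ℂ) / (m : ℂ)))
      = if m ∣ n then (m : ℂ) else 0 := by
  have hm0 : (m : ℂ) ≠ 0 := Nat.cast_ne_zero.mpr (by omega)
  set z : ℂ := Complex.exp (-(2 * (Real.pi : ℂ) * Complex.I * (n : ℂ) / (m : ℂ))) with hz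
  have hterm : ∀ j : ℕ, Complex.exp (-(2 * (Real.pi : ℂ) * Complex.I * (j : ℂ) * (n : ℂ) / (m : ℂ))) = z ^ j := by
    intro j
    rw [hz, ← Complex.exp_nat_mul]
    congr 1
    ring
  rw [Finset.sum_congr rfl fun j _ => hterm j]
  have hzm : z ^ m = 1 := by
    rw [hz, ← Complex.exp_nat_mul]
    have harg : (m : ℂ) * -(2 * (Real.pi : ℂ) * Complex.I * (n : ℂ) / (m : ℂ))
        = ((-(n : ℤ) : ℤ) : ℂ) * (2 * (Real.pi : ℂ) * Complex.I) := by
      push_cast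
      field_simp
    rw [harg, Complex.exp_int_mul_two_pi_mul_I]
  by_cases hd : m ∣ n
  · rw [if_pos hd]
    obtain ⟨c, rfl⟩ := hd
    have hz1 : z = 1 := by
      rw [hz]
      have harg : -(2 * (Real.pi : ℂ) * Complex.I * ((m * c : ℕ) : ℂ) / (m : ℂ))
          = ((-(c : ℤ) : ℤ) : ℂ) * (2 * (Real.pi : ℂ) * Complex.I) := by
        push_cast
        field_simp
      rw [harg, Complex.exp_int_mul_two_pi_mul_I]
    simp [hz1]
  · rw [if_neg hd]
    have hz1 : z ≠ 1 := by
      intro h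
      rw [hz, Complex.exp_eq_one_iff] at h
      obtain ⟨k, hk⟩ := h
      have hπ : (Real.pi : ℂ) ≠ 0 := Complex.ofReal_ne_zero.mpr Real.pi_ne_zero
      have h2 : (n : ℂ) = ((-k * m : ℤ) : ℂ) := by
        field_simp at hk
        push_cast
        have h5 : (2 * (Real.pi : ℂ) * Complex.I) * (n : ℂ)
            = (2 * (Real.pi : ℂ) * Complex.I) * (-(k : ℂ) * m) := by
          linear_combination (-(2 * (Real.pi : ℂ) * Complex.I)) * hk
        exact mul_left_cancel₀ (mul_ne_zero (mul_ne_zero two_ne_zero hπ) Complex.I_ne_zero) h5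
      have h3 : (n : ℤ) = -k * m := by exact_mod_cast h2
      exact hd (Int.natCast_dvd_natCast.mp ⟨-k, by rw [h3]; ring⟩)
    have hgeom : (∑ j ∈ Finset.range m, z ^ j) * (z - 1) = z ^ m - 1 := geom_sum_mul z m
    rw [hzm, sub_self] at hgeom
    have h0 : ∑ j ∈ Finset.range m, z ^ j = 0 := by
      rcases mul_eq_zero.mp hgeom with h | h
      · exact h
      · exact absurd (sub_eq_zero.mp h) hz1
    have h1 : ∑ j ∈ Finset.range (m + 1), z ^ j = z ^ 0 + ∑ j ∈ Finset.Icc 1 m, z ^ j := by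
      rw [← Finset.Ico_add_one_right_eq_Icc]
      exact Finset.sum_range_eq_add_Ico _ (by omega)
    rw [Finset.sum_range_succ, h0, hzm, zero_add] at h1
    simpa using h1.symm


lemma main_id (r : ℕ) (hr : 1 ≤ r) (f : ℕ → ℂ) (hf : IsREven r f) (N : ℕ) :
    ∑ n ∈ Finset.Icc 1 N, dft r f n
      = ∑ d ∈ r.divisors, moeConv f d * (((r / d : ℕ) : ℂ) * ((N / (r / d) : ℕ) : ℂ)) := by
  have hr0 : (r : ℂ) ≠ 0 := Nat.cast_ne_zero.mpr (by omega)
  have hfk : ∀ k ∈ Finset.Icc 1 r, f k = ∑ d ∈ r.divisors, (if d ∣ k then moeConv f d else 0) := by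
    intro k hk
    rw [Finset.mem_Icc] at hk
    rw [← Finset.sum_filter, ← gcd_divisors k r hk.1 hr,
      sum_moeConv f _ (Nat.gcd_pos_of_pos_right k (by omega)), hf k hk.1]
  unfold dft
  rw [Finset.sum_comm]
  calc
    ∑ k ∈ Finset.Icc 1 r, ∑ n ∈ Finset.Icc 1 N,
        f k * Complex.exp (-(2 * (Real.pi : ℂ) * Complex.I * (k : ℂ) * (n : ℂ) / (r : ℂ)))
      = ∑ k ∈ Finset.Icc 1 r, ∑ d ∈ r.divisors, (if d ∣ k then moeConv f d else 0) *
          ∑ n ∈ Finset.Icc 1 N, Complex.exp (-(2 * (Real.pi : ℂ) * Complex.I * (k : ℂ) * (n : ℂ) / (r : ℂ))) := by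
        refine Finset.sum_congr rfl fun k hk => ?_
        rw [← Finset.mul_sum, hfk k hk, Finset.sum_mul]
    _ = ∑ d ∈ r.divisors, ∑ k ∈ (Finset.Icc 1 r).filter (fun k => d ∣ k), moeConv f d *
          ∑ n ∈ Finset.Icc 1 N, Complex.exp (-(2 * (Real.pi : ℂ) * Complex.I * (k : ℂ) * (n : ℂ) / (r : ℂ))) := by
        rw [Finset.sum_comm]
        refine Finset.sum_congr rfl fun d hd => ?_
        rw [Finset.sum_filter]
        refine Finset.sum_congr rfl fun k hk => ?_
        rw [ite_mul, zero_mul]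
    _ = ∑ d ∈ r.divisors, moeConv f d * (((r / d : ℕ) : ℂ) * ((N / (r / d) : ℕ) : ℂ)) := by
        refine Finset.sum_congr rfl fun d hd => ?_
        rw [Nat.mem_divisors] at hd
        obtain ⟨hdr, _⟩ := hd
        have hd1 : 1 ≤ d := Nat.pos_of_dvd_of_pos hdr (by omega)
        have hm1 : 1 ≤ r / d := Nat.div_pos (Nat.le_of_dvd (by omega) hdr) (by omega)
        have hd0 : (d : ℂ) ≠ 0 := Nat.cast_ne_zero.mpr (Nat.one_le_iff_ne_zero.mp hd1)
        have hm0 : ((r / d : ℕ) : ℂ) ≠ 0 := Nat.cast_ne_zero.mpr (Nat.one_le_iff_ne_zero.mp hm1)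
        rw [← Finset.mul_sum]
        congr 1
        calc
          ∑ k ∈ (Finset.Icc 1 r).filter (fun k => d ∣ k),
              ∑ n ∈ Finset.Icc 1 N, Complex.exp (-(2 * (Real.pi : ℂ) * Complex.I * (k : ℂ) * (n : ℂ) / (r : ℂ)))
            = ∑ j ∈ Finset.Icc 1 (r / d),
              ∑ n ∈ Finset.Icc 1 N, Complex.exp (-(2 * (Real.pi : ℂ) * Complex.I * (j : ℂ) * (n : ℂ) / ((r / d : ℕ) : ℂ))) := by
              refine Finset.sum_nbij' (fun k => k / d) (fun j => d * j) ?_ ?_ ?_ ?_ ?_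
              · intro k hk
                simp only [Finset.mem_filter, Finset.mem_Icc] at hk
                rw [Finset.mem_Icc]
                exact ⟨(Nat.one_le_div_iff (by omega)).mpr (Nat.le_of_dvd (by omega) hk.2),
                  Nat.div_le_div_right hk.1.2⟩
              · intro j hj
                rw [Finset.mem_Icc] at hj
                simp only [Finset.mem_filter, Finset.mem_Icc]
                refine ⟨⟨Nat.one_le_iff_ne_zero.mpr (Nat.mul_ne_zero (Nat.one_le_iff_ne_zero.mp hd1) (by omega)), ?_⟩,
                  Dvd.intro j rfl⟩
                calc d * j ≤ d * (r / d) := Nat.mul_le_mul_left d hj.2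
                  _ = r := Nat.mul_div_cancel' hdr
              · intro k hk
                simp only [Finset.mem_filter] at hk
                exact Nat.mul_div_cancel' hk.2
              · intro j hj
                exact Nat.mul_div_cancel_left j (by omega)
              · intro k hk
                simp only [Finset.mem_filter, Finset.mem_Icc] at hk
                refine Finset.sum_congr rfl fun n hn => ?_
                congr 1
                obtain ⟨c, hc⟩ := hk.2
                subst hc
                simp only [Nat.mul_div_cancel_left c (show 0 < d by omega)]
                have hrdm : (r : ℂ) = (d : ℂ) * ((r / d : ℕ) : ℂ) := by
                  rw [← Nat.cast_mul, Nat.mul_div_cancel' hdr]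
                rw [hrdm]
                push_cast
                field_simp
          _ = ∑ n ∈ Finset.Icc 1 N, (if (r / d) ∣ n then ((r / d : ℕ) : ℂ) else 0) := by
              rw [Finset.sum_comm]
              exact Finset.sum_congr rfl fun n _ => expSum (r / d) hm1 n
          _ = ((r / d : ℕ) : ℂ) * ((N / (r / d) : ℕ) : ℂ) := count_dvd (r / d) N hm1


/-- Mean value of the DFT of an `r`-even function `f`:
(i) `Σ_{n=1}^{x} f̂(n) = f(r)·x` when `r | x`; (ii) `|Σ_{n≤x} f̂(n) − f(r)·x| ≤ Σ_{d|r} d·|f'(r/d)|`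
for real `x ≥ 1`; (iii) the mean value of `f̂` is `f(r)`. -/
theorem dft_stmt_19 (r : ℕ) (hr : 1 ≤ r) (f : ℕ → ℂ) (hf : IsREven r f) :
    (∀ x : ℕ, 1 ≤ x → r ∣ x → ∑ n ∈ Finset.Icc 1 x, dft r f n = f r * (x : ℂ)) ∧
    (∀ x : ℝ, 1 ≤ x →
      ‖(∑ n ∈ Finset.Icc 1 ⌊x⌋₊, dft r f n) - f r * (x : ℂ)‖ ≤
        ∑ d ∈ r.divisors, (d : ℝ) * ‖moeConv f (r / d)‖) ∧
    Filter.Tendsto (fun x : ℝ => (1 / (x : ℂ)) * ∑ n ∈ Finset.Icc 1 ⌊x⌋₊, dft r f n)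
      Filter.atTop (nhds (f r)) := by
  have hr0 : r ≠ 0 := by omega
  have part1 : ∀ x : ℕ, 1 ≤ x → r ∣ x → ∑ n ∈ Finset.Icc 1 x, dft r f n = f r * (x : ℂ) := by
    intro x hx hrx
    rw [main_id r hr f hf x, ← sum_moeConv f r hr, Finset.sum_mul]
    refine Finset.sum_congr rfl fun d hd => ?_
    rw [Nat.mem_divisors] at hd
    have hmx : (r / d) ∣ x := dvd_trans (Nat.div_dvd_of_dvd hd.1) hrx
    rw [← Nat.cast_mul, Nat.mul_div_cancel' hmx]
  have part2 : ∀ x : ℝ, 1 ≤ x →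
      ‖(∑ n ∈ Finset.Icc 1 ⌊x⌋₊, dft r f n) - f r * (x : ℂ)‖ ≤
        ∑ d ∈ r.divisors, (d : ℝ) * ‖moeConv f (r / d)‖ := by
    intro x hx
    have hx0 : (0:ℝ) ≤ x := by linarith
    have hRHS : ∑ d ∈ r.divisors, (d : ℝ) * ‖moeConv f (r / d)‖
        = ∑ d ∈ r.divisors, ((r / d : ℕ) : ℝ) * ‖moeConv f d‖ := by
      rw [← Nat.sum_div_divisors r (fun e => ((r / e : ℕ) : ℝ) * ‖moeConv f e‖)]
      refine Finset.sum_congr rfl fun d hd => ?_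
      rw [Nat.mem_divisors] at hd
      rw [Nat.div_div_self hd.1 hr0]
    rw [hRHS, main_id r hr f hf ⌊x⌋₊,
      show f r = ∑ d ∈ r.divisors, moeConv f d from (sum_moeConv f r hr).symm, Finset.sum_mul,
      ← Finset.sum_sub_distrib]
    refine le_trans (norm_sum_le _ _) (Finset.sum_le_sum fun d hd => ?_)
    rw [Nat.mem_divisors] at hd
    have hm1 : 1 ≤ r / d :=
      Nat.div_pos (Nat.le_of_dvd (by omega) hd.1) (Nat.pos_of_dvd_of_pos hd.1 (by omega))
    set m := r / d with hmdef
    set t := m * (⌊x⌋₊ / m) with ht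
    have key : moeConv f d * ((m:ℂ) * ((⌊x⌋₊ / m : ℕ):ℂ)) - moeConv f d * x
        = moeConv f d * (((t:ℕ):ℂ) - x) := by
      rw [ht]; push_cast; ring
    rw [key, norm_mul]
    have habs : ‖((t:ℕ):ℂ) - (x:ℂ)‖ = |((t:ℕ):ℝ) - x| := by
      rw [show ((t:ℕ):ℂ) - (x:ℂ) = ((((t:ℕ):ℝ) - x : ℝ) : ℂ) by push_cast; ring,
        Complex.norm_real, Real.norm_eq_abs]
    rw [habs]
    have htN : t ≤ ⌊x⌋₊ := Nat.mul_div_le ⌊x⌋₊ m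
    have hNx : (⌊x⌋₊ : ℝ) ≤ x := Nat.floor_le hx0
    have hxN : x < ⌊x⌋₊ + 1 := Nat.lt_floor_add_one x
    have hNt : ⌊x⌋₊ < t + m := by
      have h6 := Nat.div_add_mod ⌊x⌋₊ m
      have h7 := Nat.mod_lt ⌊x⌋₊ (show 0 < m by omega)
      omega
    have hbound : |((t:ℕ):ℝ) - x| ≤ (m : ℝ) := by
      rw [abs_le]
      constructor
      · have h8 : x < (t:ℝ) + m := by
          calc x < (⌊x⌋₊ : ℝ) + 1 := hxN
            _ ≤ (t:ℝ) + m := by exact_mod_cast Nat.succ_le_of_lt hNt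
        linarith
      · have h9 : (t:ℝ) ≤ x := le_trans (by exact_mod_cast htN) hNx
        linarith
    calc ‖moeConv f d‖ * |((t:ℕ):ℝ) - x|
        ≤ ‖moeConv f d‖ * m :=
          mul_le_mul_of_nonneg_left hbound (norm_nonneg _)
      _ = (m:ℝ) * ‖moeConv f d‖ := mul_comm _ _
  refine ⟨part1, part2, ?_⟩
  set C := ∑ d ∈ r.divisors, (d : ℝ) * ‖moeConv f (r / d)‖ with hC
  have h3 : Filter.Tendsto
      (fun x : ℝ => (1 / (x:ℂ)) * (∑ n ∈ Finset.Icc 1 ⌊x⌋₊, dft r f n) - f r)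
      Filter.atTop (nhds 0) := by
    apply squeeze_zero_norm' (a := fun x : ℝ => C / x)
    · filter_upwards [Filter.eventually_ge_atTop (1:ℝ)] with x hx
      have hx0 : (0:ℝ) < x := by linarith
      have hxC : (x:ℂ) ≠ 0 := by exact_mod_cast hx0.ne'
      have hrw : (1 / (x:ℂ)) * (∑ n ∈ Finset.Icc 1 ⌊x⌋₊, dft r f n) - f r
          = (1/(x:ℂ)) * ((∑ n ∈ Finset.Icc 1 ⌊x⌋₊, dft r f n) - f r * x) := by
        field_simp
      rw [hrw, norm_mul]
      have hn1 : ‖(1:ℂ)/(x:ℂ)‖ = 1 / x := by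
        rw [norm_div, norm_one, Complex.norm_real, Real.norm_eq_abs, abs_of_pos hx0]
      rw [hn1]
      calc (1/x) * ‖(∑ n ∈ Finset.Icc 1 ⌊x⌋₊, dft r f n) - f r * x‖
          ≤ (1/x) * C := mul_le_mul_of_nonneg_left (part2 x hx) (by positivity)
        _ = C / x := by ring
    · exact tendsto_const_nhds.div_atTop Filter.tendsto_id
  exact tendsto_sub_nhds_zero_iff.mp h3
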